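/- arXiv:2401.07096 — 4 statements merged into one kernel-verified Lean document; each statement's English description precedes it below -/
import Mathlib

section
/- Let (X(t), Y(t), Λ(t)) be a C¹ solution of the high-resolution ODE system F^T G Ẏ = F^T Λ + ∇f(X), 0 = G^T Λ + ∇g(Y), s² Λ̇ = FX + GY − h, where f, g are convex and differentiable and (x⋆, y⋆, λ⋆) is a saddle point of the Lagrangian (so Fx⋆ + Gy⋆ = h, ∇f(x⋆) = −F^T λ⋆, ∇g(y⋆) = −G^T λ⋆). Then the Lyapunov function E(t) = (1/2s)‖G(Y(t) − y⋆)‖² + (s/2)‖Λ(t) − λ⋆‖² is nonincreasing in t. -/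
/-!
Along the flow, `d/dt E = s⁻¹⟪u, G Ẏ⟫ + s⟪μ, Λ̇⟫` with `u = G(Y − y⋆)` and `μ = Λ − λ⋆`.
Substituting `s² Λ̇ = F(X − x⋆) + u` (the multiplier equation together with `F x⋆ + G y⋆ = h`)
turns `s · d/dt E` into `s²⟪Λ̇, G Ẏ⟫ + ⟪μ − G Ẏ, F(X − x⋆)⟫ + ⟪μ, u⟫`. The first term is
nonpositive by assumption, and the other two are nonpositive by monotonicity of `∇f` and `∇g`,
since the first two equations and the saddle-point conditions express
`∇f(X) = -Fᵀ(Λ − G Ẏ)`, `∇f(x⋆) = -Fᵀλ⋆`, `∇g(Y) = -GᵀΛ` and `∇g(y⋆) = -Gᵀλ⋆`.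
-/

open ContinuousLinearMap Set AffineMap
open scoped RealInnerProductSpace

theorem ConvexOn.inner_sub_sub_nonneg_of_hasGradientAt {E : Type*} [NormedAddCommGroup E]
    [InnerProductSpace ℝ E] [CompleteSpace E] {s : Set E} {f : E → ℝ} {a b fa fb : E}
    (hf : ConvexOn ℝ s f) (ha : a ∈ s) (hb : b ∈ s)
    (hfa : HasGradientAt f fa a) (hfb : HasGradientAt f fb b) :
    0 ≤ ⟪fa - fb, a - b⟫ := by
  have hφ : ConvexOn ℝ (lineMap b a ⁻¹' s) (f ∘ lineMap b a) := hf.comp_affineMap _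
  have hφ' {t : ℝ} {x gx : E} (hx : lineMap b a t = x) (hgx : HasGradientAt f gx x) :
      HasDerivAt (f ∘ lineMap b a) ⟪gx, a - b⟫ t := by
    subst hx
    simpa using hgx.hasFDerivAt.comp_hasDerivAt t hasDerivAt_lineMap
  have := (hφ.le_slope_of_hasDerivAt (by simpa) (by simpa) one_pos
    (hφ' (lineMap_apply_zero b a) hfb)).trans
    (hφ.slope_le_of_hasDerivAt (by simpa) (by simpa) one_pos (hφ' (lineMap_apply_one b a) hfa))
  rw [inner_sub_left]
  linarith

theorem ConvexOn.inner_sub_map_sub_nonpos_of_hasGradientAt_neg_adjoint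
    {E E' : Type*} [NormedAddCommGroup E] [InnerProductSpace ℝ E] [CompleteSpace E]
    [NormedAddCommGroup E'] [InnerProductSpace ℝ E'] [CompleteSpace E']
    {s : Set E} {f : E → ℝ} {a b : E} {u v : E'} (F : E →L[ℝ] E')
    (hf : ConvexOn ℝ s f) (ha : a ∈ s) (hb : b ∈ s)
    (hfa : HasGradientAt f (-adjoint F u) a) (hfb : HasGradientAt f (-adjoint F v) b) :
    ⟪u - v, F (a - b)⟫ ≤ 0 := by
  have := hf.inner_sub_sub_nonneg_of_hasGradientAt ha hb hfa hfb
  rwa [neg_sub_neg, ← map_sub, adjoint_inner_left, ← neg_sub, inner_neg_left, neg_nonneg] at this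

theorem inv_mul_inner_add_mul_inner_nonpos {E : Type*} [NormedAddCommGroup E]
    [InnerProductSpace ℝ E] {s : ℝ} (hs : 0 < s) {p u v w μ : E} (hw : s ^ 2 • w = p + u)
    (hp : ⟪μ - v, p⟫ ≤ 0) (hu : ⟪μ, u⟫ ≤ 0) (hwv : ⟪w, v⟫ ≤ 0) :
    s⁻¹ * ⟪u, v⟫ + s * ⟪μ, w⟫ ≤ 0 := by
  have hμw : s ^ 2 * ⟪μ, w⟫ = ⟪μ, p⟫ + ⟪μ, u⟫ := by
    rw [← real_inner_smul_right, hw, inner_add_right]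
  have hwv' : s ^ 2 * ⟪w, v⟫ = ⟪p, v⟫ + ⟪u, v⟫ := by
    rw [← real_inner_smul_left, hw, inner_add_left]
  have key : s * (s⁻¹ * ⟪u, v⟫ + s * ⟪μ, w⟫) = s ^ 2 * ⟪w, v⟫ + ⟪μ - v, p⟫ + ⟪μ, u⟫ := by
    rw [inner_sub_left, real_inner_comm p v, mul_add, ← mul_assoc, mul_inv_cancel₀ hs.ne',
      ← mul_assoc, ← sq]
    linarith
  refine nonpos_of_mul_nonpos_right ?_ hs
  rw [key]
  linarith [mul_nonpos_of_nonneg_of_nonpos (sq_nonneg s) hwv]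

theorem admm_ode_lyapunov_nonincreasing_general
    {E1 E2 Em : Type*}
    [NormedAddCommGroup E1] [InnerProductSpace ℝ E1] [CompleteSpace E1]
    [NormedAddCommGroup E2] [InnerProductSpace ℝ E2] [CompleteSpace E2]
    [NormedAddCommGroup Em] [InnerProductSpace ℝ Em] [CompleteSpace Em]
    (f : E1 → ℝ) (g : E2 → ℝ) (f' : E1 → E1) (g' : E2 → E2)
    (F : E1 →L[ℝ] Em) (G : E2 →L[ℝ] Em) (h : Em) (s : ℝ) (hs : 0 < s)
    (hfconv : ConvexOn ℝ Set.univ f) (hgconv : ConvexOn ℝ Set.univ g)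
    (hf' : ∀ x, HasGradientAt f (f' x) x) (hg' : ∀ y, HasGradientAt g (g' y) y)
    (X : ℝ → E1) (Y : ℝ → E2) (Λ : ℝ → Em)
    (Y' : ℝ → E2) (Λ' : ℝ → Em)
    (hY : ∀ t, HasDerivAt Y (Y' t) t)
    (hΛ : ∀ t, HasDerivAt Λ (Λ' t) t)
    (hodeX : ∀ t, adjoint F (G (Y' t)) = adjoint F (Λ t) + f' (X t))
    (hodeY : ∀ t, adjoint G (Λ t) + g' (Y t) = 0)
    (hodeΛ : ∀ t, s ^ 2 • Λ' t = F (X t) + G (Y t) - h)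
    (xstar : E1) (ystar : E2) (lstar : Em)
    (hsaddle : F xstar + G ystar = h)
    (hfstar : f' xstar = -adjoint F lstar) (hgstar : g' ystar = -adjoint G lstar)
    (hg'' : ∀ t, (inner ℝ (adjoint G (Λ' t)) (Y' t) : ℝ) ≤ 0) :
    AntitoneOn (fun t => (1 / (2 * s)) * ‖G (Y t) - G ystar‖ ^ 2
      + (s / 2) * ‖Λ t - lstar‖ ^ 2) (Set.Ici (0 : ℝ)) := by
  have hE (t : ℝ) : HasDerivAt (fun t => (1 / (2 * s)) * ‖G (Y t) - G ystar‖ ^ 2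
      + (s / 2) * ‖Λ t - lstar‖ ^ 2)
      (s⁻¹ * ⟪G (Y t) - G ystar, G (Y' t)⟫ + s * ⟪Λ t - lstar, Λ' t⟫) t := by
    have hu := ((G.hasFDerivAt.comp_hasDerivAt t (hY t)).sub_const (G ystar)).norm_sq
    have hμ := ((hΛ t).sub_const lstar).norm_sq
    refine ((hu.const_mul (1 / (2 * s))).add (hμ.const_mul (s / 2))).congr_deriv ?_
    simp only [Function.comp_apply]
    field_simp
  refine (antitone_of_hasDerivAt_nonpos hE fun t => ?_).antitoneOn _
  have hfX : HasGradientAt f (-adjoint F (Λ t - G (Y' t))) (X t) := by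
    rw [map_sub, neg_sub, hodeX, add_sub_cancel_left]
    exact hf' _
  have hgY : HasGradientAt g (-adjoint G (Λ t)) (Y t) := by
    rw [← eq_neg_of_add_eq_zero_right (hodeY t)]
    exact hg' _
  have hw : s ^ 2 • Λ' t = F (X t - xstar) + (G (Y t) - G ystar) := by
    rw [hodeΛ, ← hsaddle, map_sub]
    abel
  refine inv_mul_inner_add_mul_inner_nonpos hs hw ?_ ?_ ?_
  · rw [sub_right_comm]
    exact hfconv.inner_sub_map_sub_nonpos_of_hasGradientAt_neg_adjoint F (mem_univ _)
      (mem_univ _) hfX (hfstar ▸ hf' xstar)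
  · rw [← map_sub]
    exact hgconv.inner_sub_map_sub_nonpos_of_hasGradientAt_neg_adjoint G (mem_univ _)
      (mem_univ _) hgY (hgstar ▸ hg' ystar)
  · simpa only [adjoint_inner_left] using hg'' t

/-- Along solutions of the high-resolution ODE system of ADMM, the Lyapunov function
`E(t) = (1/2s)‖G(Y−y⋆)‖² + (s/2)‖Λ−λ⋆‖²` is nonincreasing on `[0, ∞)`. -/
theorem admm_ode_lyapunov_nonincreasing
    {E1 E2 Em : Type*}
    [NormedAddCommGroup E1] [InnerProductSpace ℝ E1] [CompleteSpace E1]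
    [NormedAddCommGroup E2] [InnerProductSpace ℝ E2] [CompleteSpace E2]
    [NormedAddCommGroup Em] [InnerProductSpace ℝ Em] [CompleteSpace Em]
    (f : E1 → ℝ) (g : E2 → ℝ) (f' : E1 → E1) (g' : E2 → E2)
    (F : E1 →L[ℝ] Em) (G : E2 →L[ℝ] Em) (h : Em) (s : ℝ) (hs : 0 < s)
    (hfconv : ConvexOn ℝ Set.univ f) (hgconv : ConvexOn ℝ Set.univ g)
    (hf' : ∀ x, HasGradientAt f (f' x) x) (hg' : ∀ y, HasGradientAt g (g' y) y)
    (X : ℝ → E1) (Y : ℝ → E2) (Λ : ℝ → Em)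
    (X' : ℝ → E1) (Y' : ℝ → E2) (Λ' : ℝ → Em)
    (hX : ∀ t, HasDerivAt X (X' t) t) (hY : ∀ t, HasDerivAt Y (Y' t) t)
    (hΛ : ∀ t, HasDerivAt Λ (Λ' t) t)
    (hodeX : ∀ t, adjoint F (G (Y' t)) = adjoint F (Λ t) + f' (X t))
    (hodeY : ∀ t, adjoint G (Λ t) + g' (Y t) = 0)
    (hodeΛ : ∀ t, s ^ 2 • Λ' t = F (X t) + G (Y t) - h)
    (xstar : E1) (ystar : E2) (lstar : Em)
    (hsaddle : F xstar + G ystar = h)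
    (hfstar : f' xstar = -adjoint F lstar) (hgstar : g' ystar = -adjoint G lstar)
    (hg'' : ∀ t, (inner ℝ (adjoint G (Λ' t)) (Y' t) : ℝ) ≤ 0) :
    AntitoneOn (fun t => (1 / (2 * s)) * ‖G (Y t) - G ystar‖ ^ 2
      + (s / 2) * ‖Λ t - lstar‖ ^ 2) (Set.Ici (0 : ℝ)) :=
  admm_ode_lyapunov_nonincreasing_general f g f' g' F G h s hs hfconv hgconv hf' hg' X Y Λ Y' Λ' hY
    hΛ hodeX hodeY hodeΛ xstar ystar lstar hsaddle hfstar hgstar hg''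
end

section
/- If a differentiable function E : [0, ∞) → R satisfies E'(t) ≤ −(μ/2s)‖X(t) − x⋆‖² and f is μ-strongly convex, then the time average X̄(t) = (1/t)∫₀^t X(τ)dτ satisfies ‖X̄(t) − x⋆‖² ≤ (2s/(μ t)) E(0) for all t > 0. -/
/-!
Integrating the dissipation inequality gives `(μ / 2s) ∫₀ᵗ ‖X - x⋆‖² ≤ E 0 - E t ≤ E 0`, and
Jensen's inequality for the convex function `y ↦ ‖y - x⋆‖²` bounds the squared distance of the
time average by the time average of `‖X - x⋆‖²`.
-/

open intervalIntegral MeasureTheory Set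

theorem norm_sub_sq_interval_average_le {F : Type*} [NormedAddCommGroup F] [NormedSpace ℝ F]
    [CompleteSpace F] {f : ℝ → F} {a b : ℝ} (hab : a ≠ b) (x : F)
    (hf : IntervalIntegrable f volume a b)
    (hf₂ : IntervalIntegrable (fun τ => ‖f τ - x‖ ^ 2) volume a b) :
    ‖(⨍ τ in a..b, f τ) - x‖ ^ 2 ≤ ⨍ τ in a..b, ‖f τ - x‖ ^ 2 := by
  have hconvex : ConvexOn ℝ univ fun y : F => ‖y - x‖ ^ 2 := by
    have := (convexOn_dist x convex_univ).pow (fun _ _ => dist_nonneg) 2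
    simpa only [dist_eq_norm, Pi.pow_def] using this
  refine hconvex.map_set_average_le (by fun_prop) isClosed_univ ?_ (by simp [Real.volume_uIoc])
    (by simp) (intervalIntegrable_iff.mp hf) (intervalIntegrable_iff.mp hf₂)
  simpa [Real.volume_uIoc, sub_eq_zero] using hab.symm

theorem mul_integral_le_sub_of_hasDerivAt_le {f f' g : ℝ → ℝ} {a b c : ℝ} (hab : a ≤ b)
    (hf : ContinuousOn f (Icc a b)) (hf' : ∀ t ∈ Ioo a b, HasDerivAt f (f' t) t)
    (hg : IntegrableOn g (Icc a b)) (hf'g : ∀ t ∈ Ioo a b, f' t ≤ -c * g t) :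
    c * ∫ τ in a..b, g τ ≤ f a - f b := by
  have hftc := sub_le_integral_of_hasDeriv_right_of_le hab hf
    (fun t ht => (hf' t ht).hasDerivWithinAt) (hg.const_mul (-c)) hf'g
  rw [intervalIntegral.integral_const_mul] at hftc
  linarith

/-- If `E' (t) ≤ −(μ/2s)‖X(t)−x⋆‖²` with `E` nonnegative, then the time average of `X`
converges strongly at rate `O(1/t)`. -/
theorem time_average_strong_convergence
    {Ed : Type*} [NormedAddCommGroup Ed] [InnerProductSpace ℝ Ed] [CompleteSpace Ed]
    (X : ℝ → Ed) (hX : Continuous X) (xstar : Ed) (μ s : ℝ) (hμ : 0 < μ) (hs : 0 < s)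
    (E E' : ℝ → ℝ) (hE : ∀ t, HasDerivAt E (E' t) t) (hEnonneg : ∀ t, 0 ≤ E t)
    (hE' : ∀ t, E' t ≤ -(μ / (2 * s)) * ‖X t - xstar‖ ^ 2) :
    ∀ t : ℝ, 0 < t →
      ‖(t⁻¹ • ∫ τ in (0 : ℝ)..t, X τ) - xstar‖ ^ 2 ≤ (2 * s / (μ * t)) * E 0 := by
  intro t ht
  have hg : Continuous fun τ => ‖X τ - xstar‖ ^ 2 := by fun_prop
  have hjensen := norm_sub_sq_interval_average_le ht.ne xstar (hX.intervalIntegrable 0 t)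
    (hg.intervalIntegrable 0 t)
  rw [interval_average_eq, interval_average_eq, sub_zero, smul_eq_mul] at hjensen
  have henergy := mul_integral_le_sub_of_hasDerivAt_le ht.le
    (fun τ _ => (hE τ).continuousAt.continuousWithinAt) (fun τ _ => hE τ) hg.integrableOn_Icc
    (fun τ _ => hE' τ)
  have hintegral : ∫ τ in (0 : ℝ)..t, ‖X τ - xstar‖ ^ 2 ≤ 2 * s / μ * E 0 := by
    rw [mul_comm, ← le_div_iff₀ (by positivity)] at henergy
    calc _ ≤ _ := henergy
      _ ≤ E 0 / (μ / (2 * s)) := by gcongr; linarith [hEnonneg t]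
      _ = _ := by field_simp
  calc _ ≤ t⁻¹ * ∫ τ in (0 : ℝ)..t, ‖X τ - xstar‖ ^ 2 := hjensen
    _ ≤ t⁻¹ * (2 * s / μ * E 0) := by gcongr
    _ = _ := by field_simp
end

section
/- For ADMM iterates with convex f and g, the successive-difference energy E(k) = (1/2s)‖G(y_{k+1} − y_k)‖² + (s/2)‖λ_{k+1} − λ_k‖² is nonincreasing in k. -/
/-!
Write `a = G(y_{k+2} - y_{k+1})`, `a' = G(y_{k+1} - y_k)` and `b = s(λ_{k+2} - λ_{k+1})`,
`b' = s(λ_{k+1} - λ_k)`. The multiplier update gives `F(x_{k+2} - x_{k+1}) = (b - b') - a`, so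
monotonicity of `∂f` at consecutive iterates reads `0 ≤ ⟪(a - a') - b, (b - b') - a⟫`, and
monotonicity of `∂g` reads `⟪a, b⟫ ≤ 0`. The polarization identity
`‖a'‖² + ‖b'‖² = ‖a‖² + ‖b‖² + ‖(a - a') - (b - b')‖² + 2⟪(a - a') - b, (b - b') - a⟫ - 2⟪a, b⟫`
then shows `‖a‖² + ‖b‖² ≤ ‖a'‖² + ‖b'‖²`, which is `2s` times the claim.
-/

open ContinuousLinearMap

/-- `v` is a subgradient of `f` at `x`. -/
def SubgradientAt {E : Type*} [NormedAddCommGroup E] [InnerProductSpace ℝ E]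
    (f : E → ℝ) (x v : E) : Prop :=
  ∀ y, f x + (inner ℝ v (y - x) : ℝ) ≤ f y

open RealInnerProductSpace

theorem SubgradientAt.inner_sub_nonneg {E : Type*} [NormedAddCommGroup E]
    [InnerProductSpace ℝ E] {f : E → ℝ} {p q u v : E}
    (hu : SubgradientAt f p u) (hv : SubgradientAt f q v) :
    0 ≤ ⟪u - v, p - q⟫ := by
  have hup := hu q
  have hvq := hv p
  rw [← neg_sub p q, inner_neg_right] at hup
  rw [inner_sub_left]
  linarith

theorem norm_sq_add_norm_sq_le_of_inner {V : Type*} [NormedAddCommGroup V]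
    [InnerProductSpace ℝ V] {a a' b b' : V}
    (hmono : 0 ≤ ⟪(a - a') - b, (b - b') - a⟫) (hab : ⟪a, b⟫ ≤ 0) :
    ‖a‖ ^ 2 + ‖b‖ ^ 2 ≤ ‖a'‖ ^ 2 + ‖b'‖ ^ 2 := by
  have hpolar : ‖a'‖ ^ 2 + ‖b'‖ ^ 2 = ‖a‖ ^ 2 + ‖b‖ ^ 2 + ‖(a - a') - (b - b')‖ ^ 2
      + 2 * ⟪(a - a') - b, (b - b') - a⟫ - 2 * ⟪a, b⟫ := by
    simp only [← real_inner_self_eq_norm_sq, inner_sub_left, inner_sub_right]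
    rw [real_inner_comm a a', real_inner_comm a b, real_inner_comm a b', real_inner_comm a' b,
      real_inner_comm a' b', real_inner_comm b b']
    ring
  nlinarith [sq_nonneg ‖(a - a') - (b - b')‖]

theorem admm_F_sub_F_eq {E1 E2 Em : Type*} [AddCommGroup Em] [Module ℝ Em]
    {F : E1 → Em} {G : E2 → Em} {h : Em} {s : ℝ} {x : ℕ → E1} {y : ℕ → E2} {lam : ℕ → Em}
    (hoptlam : ∀ k, s • (lam (k + 1) - lam k) = F (x (k + 1)) + G (y (k + 1)) - h) (k : ℕ) :
    F (x (k + 2)) - F (x (k + 1))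
      = (s • (lam (k + 2) - lam (k + 1)) - s • (lam (k + 1) - lam k))
        - (G (y (k + 2)) - G (y (k + 1))) := by
  rw [hoptlam (k + 1), hoptlam k]
  abel

section ADMM

variable {E1 E2 Em : Type*}
    [NormedAddCommGroup E1] [InnerProductSpace ℝ E1]
    [NormedAddCommGroup E2] [InnerProductSpace ℝ E2]
    [NormedAddCommGroup Em] [InnerProductSpace ℝ Em]
    {f : E1 → ℝ} {g : E2 → ℝ} {F : E1 →L[ℝ] Em} {G : E2 →L[ℝ] Em} {h : Em} {s : ℝ}
    {x : ℕ → E1} {y : ℕ → E2} {lam : ℕ → Em}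

theorem admm_inner_G_sub_lam_sub_nonpos [CompleteSpace E2] [CompleteSpace Em]
    (hopty : ∀ k, SubgradientAt g (y (k + 1)) (-adjoint G (lam (k + 1)))) (k : ℕ) :
    ⟪G (y (k + 2)) - G (y (k + 1)), lam (k + 2) - lam (k + 1)⟫ ≤ 0 := by
  have hmono := (hopty (k + 1)).inner_sub_nonneg (hopty k)
  rw [neg_sub_neg, ← map_sub, adjoint_inner_left, map_sub, ← neg_sub, inner_neg_left,
    real_inner_comm] at hmono
  linarith

theorem admm_subgradient_f_inner_nonneg [CompleteSpace E1] [CompleteSpace Em]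
    (hs : 0 < s)
    (hoptx : ∀ k, SubgradientAt f (x (k + 1))
      ((1 / s) • adjoint F (G (y (k + 1)) - G (y k)) - adjoint F (lam (k + 1))))
    (hoptlam : ∀ k, s • (lam (k + 1) - lam k) = F (x (k + 1)) + G (y (k + 1)) - h) (k : ℕ) :
    0 ≤ ⟪(G (y (k + 2)) - G (y (k + 1)) - (G (y (k + 1)) - G (y k)))
          - s • (lam (k + 2) - lam (k + 1)),
        (s • (lam (k + 2) - lam (k + 1)) - s • (lam (k + 1) - lam k))
          - (G (y (k + 2)) - G (y (k + 1)))⟫ := by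
  have hmono := (hoptx (k + 1)).inner_sub_nonneg (hoptx k)
  have hscaled : s • ((1 / s) • adjoint F (G (y (k + 2)) - G (y (k + 1))) - adjoint F (lam (k + 2))
      - ((1 / s) • adjoint F (G (y (k + 1)) - G (y k)) - adjoint F (lam (k + 1))))
      = adjoint F ((G (y (k + 2)) - G (y (k + 1)) - (G (y (k + 1)) - G (y k)))
          - s • (lam (k + 2) - lam (k + 1))) := by
    simp only [map_sub, map_smul, smul_sub, smul_smul, mul_one_div_cancel hs.ne', one_smul]
    abel
  rw [← admm_F_sub_F_eq hoptlam, ← map_sub F, ← adjoint_inner_left, ← hscaled,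
    real_inner_smul_left]
  exact mul_nonneg hs.le hmono

end ADMM

theorem admm_successive_difference_energy_nonincreasing_general
    {E1 E2 Em : Type*}
    [NormedAddCommGroup E1] [InnerProductSpace ℝ E1] [CompleteSpace E1]
    [NormedAddCommGroup E2] [InnerProductSpace ℝ E2] [CompleteSpace E2]
    [NormedAddCommGroup Em] [InnerProductSpace ℝ Em] [CompleteSpace Em]
    (f : E1 → ℝ) (g : E2 → ℝ)
    (F : E1 →L[ℝ] Em) (G : E2 →L[ℝ] Em) (h : Em) (s : ℝ) (hs : 0 < s)
    (x : ℕ → E1) (y : ℕ → E2) (lam : ℕ → Em)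
    (hoptx : ∀ k, SubgradientAt f (x (k + 1))
      ((1 / s) • adjoint F (G (y (k + 1)) - G (y k)) - adjoint F (lam (k + 1))))
    (hopty : ∀ k, SubgradientAt g (y (k + 1)) (-adjoint G (lam (k + 1))))
    (hoptlam : ∀ k, s • (lam (k + 1) - lam k) = F (x (k + 1)) + G (y (k + 1)) - h) :
    ∀ k : ℕ,
      (1 / (2 * s)) * ‖G (y (k + 2)) - G (y (k + 1))‖ ^ 2
          + (s / 2) * ‖lam (k + 2) - lam (k + 1)‖ ^ 2
        ≤ (1 / (2 * s)) * ‖G (y (k + 1)) - G (y k)‖ ^ 2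
          + (s / 2) * ‖lam (k + 1) - lam k‖ ^ 2 := by
  intro k
  have hab : ⟪G (y (k + 2)) - G (y (k + 1)), s • (lam (k + 2) - lam (k + 1))⟫ ≤ 0 := by
    rw [real_inner_smul_right]
    exact mul_nonpos_of_nonneg_of_nonpos hs.le (admm_inner_G_sub_lam_sub_nonpos hopty k)
  have hle :=
    norm_sq_add_norm_sq_le_of_inner (admm_subgradient_f_inner_nonneg hs hoptx hoptlam k) hab
  rw [norm_smul, norm_smul, Real.norm_of_nonneg hs.le] at hle
  have hcoef : 0 ≤ 1 / (2 * s) := by positivity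
  calc (1 / (2 * s)) * ‖G (y (k + 2)) - G (y (k + 1))‖ ^ 2
          + (s / 2) * ‖lam (k + 2) - lam (k + 1)‖ ^ 2
        = (1 / (2 * s)) * (‖G (y (k + 2)) - G (y (k + 1))‖ ^ 2
          + (s * ‖lam (k + 2) - lam (k + 1)‖) ^ 2) := by field_simp
    _ ≤ (1 / (2 * s)) * (‖G (y (k + 1)) - G (y k)‖ ^ 2 + (s * ‖lam (k + 1) - lam k‖) ^ 2) :=
        mul_le_mul_of_nonneg_left hle hcoef
    _ = (1 / (2 * s)) * ‖G (y (k + 1)) - G (y k)‖ ^ 2 + (s / 2) * ‖lam (k + 1) - lam k‖ ^ 2 := by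
        field_simp

/-- The successive-difference energy of the ADMM iterates is nonincreasing. -/
theorem admm_successive_difference_energy_nonincreasing
    {E1 E2 Em : Type*}
    [NormedAddCommGroup E1] [InnerProductSpace ℝ E1] [CompleteSpace E1]
    [NormedAddCommGroup E2] [InnerProductSpace ℝ E2] [CompleteSpace E2]
    [NormedAddCommGroup Em] [InnerProductSpace ℝ Em] [CompleteSpace Em]
    (f : E1 → ℝ) (g : E2 → ℝ)
    (hfconv : ConvexOn ℝ Set.univ f) (hgconv : ConvexOn ℝ Set.univ g)
    (F : E1 →L[ℝ] Em) (G : E2 →L[ℝ] Em) (h : Em) (s : ℝ) (hs : 0 < s)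
    (x : ℕ → E1) (y : ℕ → E2) (lam : ℕ → Em)
    (hoptx : ∀ k, SubgradientAt f (x (k + 1))
      ((1 / s) • adjoint F (G (y (k + 1)) - G (y k)) - adjoint F (lam (k + 1))))
    (hopty : ∀ k, SubgradientAt g (y (k + 1)) (-adjoint G (lam (k + 1))))
    (hoptlam : ∀ k, s • (lam (k + 1) - lam k) = F (x (k + 1)) + G (y (k + 1)) - h) :
    ∀ k : ℕ,
      (1 / (2 * s)) * ‖G (y (k + 2)) - G (y (k + 1))‖ ^ 2
          + (s / 2) * ‖lam (k + 2) - lam (k + 1)‖ ^ 2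
        ≤ (1 / (2 * s)) * ‖G (y (k + 1)) - G (y k)‖ ^ 2
          + (s / 2) * ‖lam (k + 1) - lam k‖ ^ 2 :=
  admm_successive_difference_energy_nonincreasing_general f g F G h s hs x y lam hoptx hopty hoptlam
end

section
/- Assume f is μ-strongly convex and the ADMM optimality conditions and saddle-point assumptions hold. Then the discrete Lyapunov function E(k) = (1/2s)‖G(y_k − y⋆)‖² + (s/2)‖λ_k − λ⋆‖² satisfies E(k+1) − E(k) ≤ −(μ/2)‖x_{k+1} − x⋆‖², and consequently the running average x̄_N = (1/(N+1)) Σ_{k=1}^{N+1} x_k satisfies ‖x̄_N − x⋆‖² ≤ (‖G(y_0 − y⋆)‖² + s²‖λ_0 − λ⋆‖²)/(μ s (N+1)). -/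
/-!
Subtracting the saddle-point conditions from the optimality conditions of an ADMM step, strong
monotonicity of `∂f` and monotonicity of `∂g` bound the two cross terms in the change of the
Lyapunov function `E(k) = ‖G(y_k - y⋆)‖² / (2s) + (s/2)‖λ_k - λ⋆‖²`; expanding the squares, what
is left is `-(μ/2)‖x_{k+1} - x⋆‖²` minus the square `‖G(y_{k+1} - y_k) - s(λ_{k+1} - λ_k)‖² / (2s)`.
Telescoping gives `(μ/2) ∑ ‖x_k - x⋆‖² ≤ E(0)`, and Jensen's inequality for `‖·‖²` transfers this
bound to the running average.
-/

open ContinuousLinearMap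

open Finset
open scoped RealInnerProductSpace

section Subgradient

variable {E : Type*} [NormedAddCommGroup E] [InnerProductSpace ℝ E] {f : E → ℝ} {μ : ℝ}
  {p q u v : E}

theorem le_inner_sub_sub_of_strongSubgradient
    (hu : ∀ z, f p + ⟪u, z - p⟫ + μ / 2 * ‖z - p‖ ^ 2 ≤ f z) (hv : SubgradientAt f q v) :
    μ / 2 * ‖p - q‖ ^ 2 ≤ ⟪u - v, p - q⟫ := by
  have hup := hu q
  have hvq := hv p
  rw [norm_sub_rev, ← neg_sub p q, inner_neg_right] at hup
  rw [inner_sub_left]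
  linarith

theorem SubgradientAt.inner_sub_sub_nonneg (hu : SubgradientAt f p u)
    (hv : SubgradientAt f q v) : 0 ≤ ⟪u - v, p - q⟫ := by
  simpa using le_inner_sub_sub_of_strongSubgradient (μ := 0) (fun z => by simpa using hu z) hv

end Subgradient

theorem norm_sq_average_sub_le {ι E : Type*} [SeminormedAddCommGroup E] [NormedSpace ℝ E]
    (t : Finset ι) (ht : t.Nonempty) (z : ι → E) (c : E) :
    ‖(#t : ℝ)⁻¹ • ∑ i ∈ t, z i - c‖ ^ 2 ≤ (#t : ℝ)⁻¹ * ∑ i ∈ t, ‖z i - c‖ ^ 2 := by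
  have hw : ∑ _i ∈ t, (#t : ℝ)⁻¹ = 1 := by
    rw [sum_const, nsmul_eq_mul, mul_inv_cancel₀ (by exact_mod_cast ht.card_pos.ne')]
  have hmean : (#t : ℝ)⁻¹ • ∑ i ∈ t, z i - c = ∑ i ∈ t, (#t : ℝ)⁻¹ • (z i - c) := by
    rw [← smul_sum, sum_sub_distrib, smul_sub, sum_const, ← Nat.cast_smul_eq_nsmul ℝ, smul_smul,
      inv_mul_cancel₀ (by exact_mod_cast ht.card_pos.ne'), one_smul]
  have hconv : ConvexOn ℝ Set.univ fun w : E => ‖w‖ ^ 2 :=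
    (convexOn_norm convex_univ).pow (fun w _ => norm_nonneg w) 2
  rw [hmean, mul_sum]
  exact hconv.map_sum_le (fun _ _ => by positivity) hw (fun _ _ => Set.mem_univ _)

theorem sum_range_le_of_sub_le_neg (Φ c : ℕ → ℝ) (hΦ : ∀ k, Φ (k + 1) - Φ k ≤ -c k) (n : ℕ)
    (hn : 0 ≤ Φ n) : ∑ k ∈ range n, c k ≤ Φ 0 := by
  have htel : ∑ k ∈ range n, (Φ (k + 1) - Φ k) ≤ ∑ k ∈ range n, -c k :=
    sum_le_sum fun k _ => hΦ k
  rw [sum_range_sub, sum_neg_distrib] at htel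
  linarith

noncomputable def admmLyapunov {Em : Type*} [NormedAddCommGroup Em] (s : ℝ) (a p : Em) : ℝ :=
  1 / (2 * s) * ‖a‖ ^ 2 + s / 2 * ‖p‖ ^ 2

theorem admmLyapunov_sub_le {Em : Type*} [NormedAddCommGroup Em] [InnerProductSpace ℝ Em]
    {s : ℝ} (hs : 0 < s) (a b p q : Em) :
    admmLyapunov s a p - admmLyapunov s b q
      ≤ ⟪p, a⟫ - ⟪(1 / s) • (a - b) - p, s • (p - q) - a⟫ := by
  have hexpand : admmLyapunov s a p - admmLyapunov s b q
      = ⟪p, a⟫ - ⟪(1 / s) • (a - b) - p, s • (p - q) - a⟫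
        - ‖(a - b) - s • (p - q)‖ ^ 2 / (2 * s) := by
    unfold admmLyapunov
    simp only [← real_inner_self_eq_norm_sq, inner_sub_left, inner_sub_right,
      real_inner_smul_left, real_inner_smul_right]
    rw [real_inner_comm b a, real_inner_comm q p, real_inner_comm a p, real_inner_comm a q,
      real_inner_comm b p, real_inner_comm b q]
    field_simp
    ring
  have : 0 ≤ ‖(a - b) - s • (p - q)‖ ^ 2 / (2 * s) := by positivity
  linarith

section Step

variable {E1 E2 Em : Type*}
  [NormedAddCommGroup E1] [InnerProductSpace ℝ E1] [CompleteSpace E1]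
  [NormedAddCommGroup E2] [InnerProductSpace ℝ E2] [CompleteSpace E2]
  [NormedAddCommGroup Em] [InnerProductSpace ℝ Em] [CompleteSpace Em]
  {f : E1 → ℝ} {g : E2 → ℝ} {μ s : ℝ} {F : E1 →L[ℝ] Em} {G : E2 →L[ℝ] Em} {h : Em}
  {x₁ xstar : E1} {y₀ y₁ ystar : E2} {l₀ l₁ lstar : Em}

theorem admmLyapunov_step_le (hs : 0 < s)
    (hfsc : ∀ p u, SubgradientAt f p u → ∀ z, f p + ⟪u, z - p⟫ + μ / 2 * ‖z - p‖ ^ 2 ≤ f z)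
    (hx : SubgradientAt f x₁ ((1 / s) • adjoint F (G y₁ - G y₀) - adjoint F l₁))
    (hy : SubgradientAt g y₁ (-adjoint G l₁))
    (hl : s • (l₁ - l₀) = F x₁ + G y₁ - h)
    (hsaddle : F xstar + G ystar = h)
    (hfstar : SubgradientAt f xstar (-adjoint F lstar))
    (hgstar : SubgradientAt g ystar (-adjoint G lstar)) :
    admmLyapunov s (G y₁ - G ystar) (l₁ - lstar) - admmLyapunov s (G y₀ - G ystar) (l₀ - lstar)
      ≤ -(μ / 2) * ‖x₁ - xstar‖ ^ 2 := by
  have hdual : ⟪l₁ - lstar, G y₁ - G ystar⟫ ≤ 0 := by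
    have := hy.inner_sub_sub_nonneg hgstar
    rw [neg_sub_neg, ← map_sub, adjoint_inner_left, map_sub, ← neg_sub l₁, inner_neg_left] at this
    linarith
  have hprimal : F (x₁ - xstar) = s • ((l₁ - lstar) - (l₀ - lstar)) - (G y₁ - G ystar) := by
    rw [sub_sub_sub_cancel_right, hl, map_sub, ← hsaddle]
    module
  have hstrong : μ / 2 * ‖x₁ - xstar‖ ^ 2 ≤ ⟪(1 / s) • ((G y₁ - G ystar) - (G y₀ - G ystar))
      - (l₁ - lstar), s • ((l₁ - lstar) - (l₀ - lstar)) - (G y₁ - G ystar)⟫ := by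
    rw [← hprimal, ← adjoint_inner_left]
    convert le_inner_sub_sub_of_strongSubgradient (hfsc _ _ hx) hfstar using 2
    simp only [map_sub, map_smul]
    module
  linarith [admmLyapunov_sub_le hs (G y₁ - G ystar) (G y₀ - G ystar) (l₁ - lstar) (l₀ - lstar)]

end Step

theorem admm_strongly_convex_average_rate_general
    {E1 E2 Em : Type*}
    [NormedAddCommGroup E1] [InnerProductSpace ℝ E1] [CompleteSpace E1]
    [NormedAddCommGroup E2] [InnerProductSpace ℝ E2] [CompleteSpace E2]
    [NormedAddCommGroup Em] [InnerProductSpace ℝ Em] [CompleteSpace Em]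
    (f : E1 → ℝ) (g : E2 → ℝ) (μ : ℝ) (hμ : 0 < μ)
    (hfsc : ∀ p u, SubgradientAt f p u →
      ∀ z, f p + (inner ℝ u (z - p) : ℝ) + (μ / 2) * ‖z - p‖ ^ 2 ≤ f z)
    (F : E1 →L[ℝ] Em) (G : E2 →L[ℝ] Em) (h : Em) (s : ℝ) (hs : 0 < s)
    (x : ℕ → E1) (y : ℕ → E2) (lam : ℕ → Em)
    (hoptx : ∀ k, SubgradientAt f (x (k + 1))
      ((1 / s) • adjoint F (G (y (k + 1)) - G (y k)) - adjoint F (lam (k + 1))))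
    (hopty : ∀ k, SubgradientAt g (y (k + 1)) (-adjoint G (lam (k + 1))))
    (hoptlam : ∀ k, s • (lam (k + 1) - lam k) = F (x (k + 1)) + G (y (k + 1)) - h)
    (xstar : E1) (ystar : E2) (lstar : Em)
    (hsaddle : F xstar + G ystar = h)
    (hfstar : SubgradientAt f xstar (-adjoint F lstar))
    (hgstar : SubgradientAt g ystar (-adjoint G lstar)) :
    (∀ k, ((1 / (2 * s)) * ‖G (y (k + 1)) - G ystar‖ ^ 2
          + (s / 2) * ‖lam (k + 1) - lstar‖ ^ 2)
        - ((1 / (2 * s)) * ‖G (y k) - G ystar‖ ^ 2 + (s / 2) * ‖lam k - lstar‖ ^ 2)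
      ≤ -(μ / 2) * ‖x (k + 1) - xstar‖ ^ 2) ∧
    (∀ N : ℕ,
      ‖((N + 1 : ℝ)⁻¹ • ∑ k ∈ Finset.range (N + 1), x (k + 1)) - xstar‖ ^ 2
        ≤ (‖G (y 0) - G ystar‖ ^ 2 + s ^ 2 * ‖lam 0 - lstar‖ ^ 2) / (μ * s * (N + 1 : ℝ))) := by
  set Φ : ℕ → ℝ := fun k => admmLyapunov s (G (y k) - G ystar) (lam k - lstar)
  have hdescent (k : ℕ) : Φ (k + 1) - Φ k ≤ -(μ / 2) * ‖x (k + 1) - xstar‖ ^ 2 :=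
    admmLyapunov_step_le hs hfsc (hoptx k) (hopty k) (hoptlam k) hsaddle hfstar hgstar
  refine ⟨hdescent, fun N => ?_⟩
  have hsum : ∑ k ∈ range (N + 1), μ / 2 * ‖x (k + 1) - xstar‖ ^ 2 ≤ Φ 0 :=
    sum_range_le_of_sub_le_neg Φ _ (fun k => by simpa only [neg_mul] using hdescent k) (N + 1)
      (by unfold Φ admmLyapunov; positivity)
  rw [← mul_sum] at hsum
  have havg :=
    norm_sq_average_sub_le (range (N + 1)) nonempty_range_add_one (fun k => x (k + 1)) xstar
  rw [card_range, Nat.cast_succ] at havg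
  calc _ ≤ ((N : ℝ) + 1)⁻¹ * ∑ k ∈ range (N + 1), ‖x (k + 1) - xstar‖ ^ 2 := havg
    _ ≤ ((N : ℝ) + 1)⁻¹ * (2 / μ * Φ 0) := by
        gcongr
        rw [div_mul_eq_mul_div, le_div_iff₀' hμ]
        linarith
    _ = _ := by
        unfold Φ admmLyapunov
        field_simp

/-- With `f` μ-strongly convex, the ADMM Lyapunov function decreases at rate
`−(μ/2)‖x_{k+1}−x⋆‖²` and the running average converges strongly at rate `O(1/N)`. -/
theorem admm_strongly_convex_average_rate
    {E1 E2 Em : Type*}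
    [NormedAddCommGroup E1] [InnerProductSpace ℝ E1] [CompleteSpace E1]
    [NormedAddCommGroup E2] [InnerProductSpace ℝ E2] [CompleteSpace E2]
    [NormedAddCommGroup Em] [InnerProductSpace ℝ Em] [CompleteSpace Em]
    (f : E1 → ℝ) (g : E2 → ℝ) (μ : ℝ) (hμ : 0 < μ)
    (hfsc : ∀ p u, SubgradientAt f p u →
      ∀ z, f p + (inner ℝ u (z - p) : ℝ) + (μ / 2) * ‖z - p‖ ^ 2 ≤ f z)
    (hgconv : ConvexOn ℝ Set.univ g)
    (F : E1 →L[ℝ] Em) (G : E2 →L[ℝ] Em) (h : Em) (s : ℝ) (hs : 0 < s)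
    (x : ℕ → E1) (y : ℕ → E2) (lam : ℕ → Em)
    (hoptx : ∀ k, SubgradientAt f (x (k + 1))
      ((1 / s) • adjoint F (G (y (k + 1)) - G (y k)) - adjoint F (lam (k + 1))))
    (hopty : ∀ k, SubgradientAt g (y (k + 1)) (-adjoint G (lam (k + 1))))
    (hoptlam : ∀ k, s • (lam (k + 1) - lam k) = F (x (k + 1)) + G (y (k + 1)) - h)
    (xstar : E1) (ystar : E2) (lstar : Em)
    (hsaddle : F xstar + G ystar = h)
    (hfstar : SubgradientAt f xstar (-adjoint F lstar))
    (hgstar : SubgradientAt g ystar (-adjoint G lstar)) :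
    (∀ k, ((1 / (2 * s)) * ‖G (y (k + 1)) - G ystar‖ ^ 2
          + (s / 2) * ‖lam (k + 1) - lstar‖ ^ 2)
        - ((1 / (2 * s)) * ‖G (y k) - G ystar‖ ^ 2 + (s / 2) * ‖lam k - lstar‖ ^ 2)
      ≤ -(μ / 2) * ‖x (k + 1) - xstar‖ ^ 2) ∧
    (∀ N : ℕ,
      ‖((N + 1 : ℝ)⁻¹ • ∑ k ∈ Finset.range (N + 1), x (k + 1)) - xstar‖ ^ 2
        ≤ (‖G (y 0) - G ystar‖ ^ 2 + s ^ 2 * ‖lam 0 - lstar‖ ^ 2) / (μ * s * (N + 1 : ℝ))) :=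
  admm_strongly_convex_average_rate_general f g μ hμ hfsc F G h s hs x y lam hoptx hopty hoptlam
    xstar ystar lstar hsaddle hfstar hgstar
end
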